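/- Let L₀ be the transfer operator of the Bolyai–Rényi map at parameter t = 0. Then the pressure at 0 vanishes: lim_{n→∞} (1/n) log ‖L₀ⁿ 1‖_∞ = 0, where 1 denotes the constant function 1 on [0,1]. -/
import Mathlib

open MeasureTheory Real Filter

/-- The transfer operator of the Bolyai–Rényi map at parameter `t`. -/
noncomputable def Lt (t : ℝ) (f : ℝ → ℝ) : ℝ → ℝ := fun x =>
  ∑ i ∈ Finset.Icc (1 : ℕ) 3,
    (2 * Real.sqrt ((i : ℝ) + x)) ^ (-(1 + t)) * f (Real.sqrt ((i : ℝ) + x) - 1)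

/-- Supremum norm over the interval `[0,1]`. -/
noncomputable def supNorm (f : ℝ → ℝ) : ℝ := ⨆ x : Set.Icc (0 : ℝ) 1, |f x|

lemma Lt0_eq (f : ℝ → ℝ) (x : ℝ) (hx : 0 ≤ x) :
    Lt 0 f x = (2 * Real.sqrt (1 + x))⁻¹ * f (Real.sqrt (1 + x) - 1)
      + (2 * Real.sqrt (2 + x))⁻¹ * f (Real.sqrt (2 + x) - 1)
      + (2 * Real.sqrt (3 + x))⁻¹ * f (Real.sqrt (3 + x) - 1) := by
  have h : ∀ c : ℝ, 0 ≤ c → (2 * Real.sqrt (c + x)) ^ (-(1 + (0:ℝ))) = (2 * Real.sqrt (c + x))⁻¹ := by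
    intro c hc
    rw [show (-(1 + (0:ℝ))) = -1 by norm_num,
      Real.rpow_neg (by positivity), Real.rpow_one]
  unfold Lt
  rw [show Finset.Icc (1:ℕ) 3 = {1, 2, 3} from rfl]
  rw [Finset.sum_insert (by decide), Finset.sum_insert (by decide), Finset.sum_singleton]
  push_cast
  rw [h 1 (by norm_num), h 2 (by norm_num), h 3 (by norm_num)]
  ring


lemma one_le_sqrt' {x c : ℝ} (hx : 0 ≤ x) (hc1 : 1 ≤ c) : 1 ≤ Real.sqrt (c + x) := by
  rw [show (1:ℝ) = Real.sqrt 1 by simp]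
  exact Real.sqrt_le_sqrt (by linarith)

lemma sqrt_mem {x c : ℝ} (hx : x ∈ Set.Icc (0:ℝ) 1) (hc1 : 1 ≤ c) (hc3 : c ≤ 3) :
    Real.sqrt (c + x) - 1 ∈ Set.Icc (0:ℝ) 1 := by
  obtain ⟨h0, h1⟩ := hx
  constructor
  · have := one_le_sqrt' h0 hc1; linarith
  · have : Real.sqrt (c + x) ≤ 2 := by
      rw [show (2:ℝ) = Real.sqrt 4 by rw [show (4:ℝ) = 2^2 by norm_num, Real.sqrt_sq (by norm_num)]]
      exact Real.sqrt_le_sqrt (by linarith)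
    linarith

lemma branch_contract {x y c : ℝ} (hx : 0 ≤ x) (hy : 0 ≤ y) (hc1 : 1 ≤ c) :
    |(Real.sqrt (c + x) - 1) - (Real.sqrt (c + y) - 1)| ≤ |x - y| / 2 := by
  have hax := one_le_sqrt' hx hc1
  have hay := one_le_sqrt' hy hc1
  have hsx : Real.sqrt (c + x) ^ 2 = c + x := Real.sq_sqrt (by linarith)
  have hsy : Real.sqrt (c + y) ^ 2 = c + y := Real.sq_sqrt (by linarith)
  have h1 := le_abs_self (x - y)
  have h2 := neg_abs_le (x - y)
  rw [abs_le]
  constructor <;> nlinarith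

lemma weight_distortion {x y c : ℝ} (hx : 0 ≤ x) (hy : 0 ≤ y) (hc1 : 1 ≤ c) :
    (2 * Real.sqrt (c + x))⁻¹ ≤ Real.exp (|x - y| / 2) * (2 * Real.sqrt (c + y))⁻¹ := by
  have hax := one_le_sqrt' hx hc1
  have hay := one_le_sqrt' hy hc1
  have hsx : Real.sqrt (c + x) ^ 2 = c + x := Real.sq_sqrt (by linarith)
  have hsy : Real.sqrt (c + y) ^ 2 = c + y := Real.sq_sqrt (by linarith)
  have hE : Real.exp (|x - y| / 2) ^ 2 = Real.exp |x - y| := by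
    rw [sq, ← Real.exp_add]; ring_nf
  have hE1 := Real.add_one_le_exp |x - y|
  have habs : y - x ≤ |x - y| := by rw [abs_sub_comm]; exact le_abs_self _
  have hEpos : 0 < Real.exp (|x - y| / 2) := Real.exp_pos _
  have key : Real.sqrt (c + y) ≤ Real.exp (|x - y| / 2) * Real.sqrt (c + x) := by
    have h2 : Real.sqrt (c + y) ^ 2 ≤ (Real.exp (|x - y| / 2) * Real.sqrt (c + x)) ^ 2 := by
      rw [mul_pow, hE]
      nlinarith [abs_nonneg (x - y)]
    nlinarith [h2, mul_pos hEpos (show (0:ℝ) < Real.sqrt (c + x) by linarith)]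
  rw [show Real.exp (|x - y| / 2) * (2 * Real.sqrt (c + y))⁻¹
      = Real.exp (|x - y| / 2) / (2 * Real.sqrt (c + y)) by ring,
    inv_eq_one_div, div_le_div_iff₀ (by positivity) (by positivity)]
  nlinarith [key]


lemma sqrt_cont (c : ℝ) : Continuous (fun x : ℝ => Real.sqrt (c + x)) :=
  Real.continuous_sqrt.comp (continuous_const.add continuous_id)

lemma term_contOn {f : ℝ → ℝ} (hf : ContinuousOn f (Set.Icc 0 1)) {c : ℝ}
    (hc1 : 1 ≤ c) (hc3 : c ≤ 3) :
    ContinuousOn (fun x => (2 * Real.sqrt (c + x))⁻¹ * f (Real.sqrt (c + x) - 1))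
      (Set.Icc (0:ℝ) 1) := by
  apply ContinuousOn.mul
  · apply ContinuousOn.inv₀
    · exact (continuous_const.mul (sqrt_cont c)).continuousOn
    · intro x hx
      have := one_le_sqrt' hx.1 hc1
      positivity
  · exact hf.comp ((sqrt_cont c).sub continuous_const).continuousOn
      (fun x hx => sqrt_mem hx hc1 hc3)

lemma Lt0_contOn {f : ℝ → ℝ} (hf : ContinuousOn f (Set.Icc 0 1)) :
    ContinuousOn (Lt 0 f) (Set.Icc (0:ℝ) 1) := by
  refine ContinuousOn.congr
    (f := fun x => (2 * Real.sqrt (1 + x))⁻¹ * f (Real.sqrt (1 + x) - 1)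
      + (2 * Real.sqrt (2 + x))⁻¹ * f (Real.sqrt (2 + x) - 1)
      + (2 * Real.sqrt (3 + x))⁻¹ * f (Real.sqrt (3 + x) - 1))
    (((term_contOn hf (by norm_num) (by norm_num)).add
      (term_contOn hf (by norm_num) (by norm_num))).add
      (term_contOn hf (by norm_num) (by norm_num)))
    (fun x hx => Lt0_eq f x hx.1)

lemma hasDeriv_branch {c : ℝ} (hc1 : 1 ≤ c) {x : ℝ} (hx : 0 ≤ x) :
    HasDerivAt (fun x => Real.sqrt (c + x) - 1) ((2 * Real.sqrt (c + x))⁻¹) x := by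
  have h1 : HasDerivAt (fun x : ℝ => c + x) 1 x := by
    simpa using (hasDerivAt_id x).const_add c
  have h2 : HasDerivAt Real.sqrt (1 / (2 * Real.sqrt (c + x))) (c + x) :=
    Real.hasDerivAt_sqrt (by linarith)
  have := (h2.comp x h1).sub_const 1
  simpa [one_div] using this

lemma int_branch {f : ℝ → ℝ} (hf : ContinuousOn f (Set.Icc 0 1)) {c : ℝ}
    (hc1 : 1 ≤ c) (hc3 : c ≤ 3) :
    ∫ x in (0:ℝ)..1, (2 * Real.sqrt (c + x))⁻¹ * f (Real.sqrt (c + x) - 1)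
      = ∫ u in (Real.sqrt c - 1)..(Real.sqrt (c + 1) - 1), f u := by
  have huIcc : Set.uIcc (0:ℝ) 1 = Set.Icc 0 1 := Set.uIcc_of_le (by norm_num)
  have h := intervalIntegral.integral_comp_smul_deriv''
    (f := fun x => Real.sqrt (c + x) - 1) (f' := fun x => (2 * Real.sqrt (c + x))⁻¹)
    (g := f) (a := 0) (b := 1)
    (by rw [huIcc]; exact ((sqrt_cont c).sub continuous_const).continuousOn)
    (by intro x hx
        exact (hasDeriv_branch hc1 (by simp at hx; linarith [hx.1])).hasDerivWithinAt)
    (by rw [huIcc]; apply ContinuousOn.inv₀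
        · exact (continuous_const.mul (sqrt_cont c)).continuousOn
        · intro x hx; have := one_le_sqrt' hx.1 hc1; positivity)
    (by apply hf.mono
        rintro u ⟨x, hx, rfl⟩
        rw [huIcc] at hx
        exact sqrt_mem hx hc1 hc3)
  simp only [smul_eq_mul, Function.comp] at h
  rw [h]
  norm_num


lemma sqrt2m1_mem : Real.sqrt 2 - 1 ∈ Set.Icc (0:ℝ) 1 := by
  constructor
  · nlinarith [Real.sq_sqrt (by norm_num : (0:ℝ) ≤ 2), Real.sqrt_nonneg 2]
  · nlinarith [Real.sq_sqrt (by norm_num : (0:ℝ) ≤ 2), Real.sqrt_nonneg 2]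

lemma sqrt3m1_mem : Real.sqrt 3 - 1 ∈ Set.Icc (0:ℝ) 1 := by
  constructor
  · nlinarith [Real.sq_sqrt (by norm_num : (0:ℝ) ≤ 3), Real.sqrt_nonneg 3]
  · nlinarith [Real.sq_sqrt (by norm_num : (0:ℝ) ≤ 3), Real.sqrt_nonneg 3]

lemma int_Lt0 {f : ℝ → ℝ} (hf : ContinuousOn f (Set.Icc 0 1)) :
    ∫ x in (0:ℝ)..1, Lt 0 f x = ∫ x in (0:ℝ)..1, f x := by
  have huIcc : Set.uIcc (0:ℝ) 1 = Set.Icc 0 1 := Set.uIcc_of_le (by norm_num)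
  have hi1 : IntervalIntegrable
      (fun x => (2 * Real.sqrt (1 + x))⁻¹ * f (Real.sqrt (1 + x) - 1)) volume 0 1 :=
    ContinuousOn.intervalIntegrable (by rw [huIcc]; exact term_contOn hf (by norm_num) (by norm_num))
  have hi2 : IntervalIntegrable
      (fun x => (2 * Real.sqrt (2 + x))⁻¹ * f (Real.sqrt (2 + x) - 1)) volume 0 1 :=
    ContinuousOn.intervalIntegrable (by rw [huIcc]; exact term_contOn hf (by norm_num) (by norm_num))
  have hi3 : IntervalIntegrable
      (fun x => (2 * Real.sqrt (3 + x))⁻¹ * f (Real.sqrt (3 + x) - 1)) volume 0 1 :=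
    ContinuousOn.intervalIntegrable (by rw [huIcc]; exact term_contOn hf (by norm_num) (by norm_num))
  have hcongr : ∫ x in (0:ℝ)..1, Lt 0 f x
      = ∫ x in (0:ℝ)..1, ((2 * Real.sqrt (1 + x))⁻¹ * f (Real.sqrt (1 + x) - 1)
        + (2 * Real.sqrt (2 + x))⁻¹ * f (Real.sqrt (2 + x) - 1)
        + (2 * Real.sqrt (3 + x))⁻¹ * f (Real.sqrt (3 + x) - 1)) := by
    apply intervalIntegral.integral_congr
    intro x hx
    rw [huIcc] at hx
    exact Lt0_eq f x hx.1
  rw [hcongr, intervalIntegral.integral_add (hi1.add hi2) hi3,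
    intervalIntegral.integral_add hi1 hi2,
    int_branch hf (by norm_num) (by norm_num),
    int_branch hf (by norm_num) (by norm_num),
    int_branch hf (by norm_num) (by norm_num)]
  have e1 : Real.sqrt 1 - 1 = 0 := by simp
  have e4 : Real.sqrt (3 + 1) - 1 = 1 := by
    rw [show (3 + 1:ℝ) = 2^2 by norm_num, Real.sqrt_sq (by norm_num)]; norm_num
  have e2 : (1 + 1 : ℝ) = 2 := by norm_num
  have e3 : (2 + 1 : ℝ) = 3 := by norm_num
  rw [e1, e2, e3, e4]
  have j1 : IntervalIntegrable f volume 0 (Real.sqrt 2 - 1) :=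
    ContinuousOn.intervalIntegrable (hf.mono (by
      rw [Set.uIcc_of_le sqrt2m1_mem.1]
      exact Set.Icc_subset_Icc le_rfl sqrt2m1_mem.2))
  have h23 : Real.sqrt 2 - 1 ≤ Real.sqrt 3 - 1 :=
    sub_le_sub_right (Real.sqrt_le_sqrt (by norm_num)) 1
  have j2 : IntervalIntegrable f volume (Real.sqrt 2 - 1) (Real.sqrt 3 - 1) :=
    ContinuousOn.intervalIntegrable (hf.mono (by
      rw [Set.uIcc_of_le h23]
      exact Set.Icc_subset_Icc sqrt2m1_mem.1 sqrt3m1_mem.2))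
  have j3 : IntervalIntegrable f volume (Real.sqrt 3 - 1) 1 :=
    ContinuousOn.intervalIntegrable (hf.mono (by
      rw [Set.uIcc_of_le sqrt3m1_mem.2]
      exact Set.Icc_subset_Icc sqrt3m1_mem.1 le_rfl))
  rw [intervalIntegral.integral_add_adjacent_intervals j1 j2,
    intervalIntegral.integral_add_adjacent_intervals (j1.trans j2) j3]


/-- one term of the distortion estimate -/
lemma term_distort {g : ℝ → ℝ} {x y c : ℝ} (hx : x ∈ Set.Icc (0:ℝ) 1)
    (hy : y ∈ Set.Icc (0:ℝ) 1) (hc1 : 1 ≤ c) (hc3 : c ≤ 3)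
    (hpos : ∀ z ∈ Set.Icc (0:ℝ) 1, 0 ≤ g z)
    (hdist : ∀ z ∈ Set.Icc (0:ℝ) 1, ∀ w ∈ Set.Icc (0:ℝ) 1, g z ≤ Real.exp |z - w| * g w) :
    (2 * Real.sqrt (c + x))⁻¹ * g (Real.sqrt (c + x) - 1)
      ≤ Real.exp |x - y| * ((2 * Real.sqrt (c + y))⁻¹ * g (Real.sqrt (c + y) - 1)) := by
  have hmx := sqrt_mem hx hc1 hc3
  have hmy := sqrt_mem hy hc1 hc3
  have h1 : g (Real.sqrt (c + x) - 1)
      ≤ Real.exp (|x - y| / 2) * g (Real.sqrt (c + y) - 1) := by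
    calc g (Real.sqrt (c + x) - 1)
        ≤ Real.exp |(Real.sqrt (c + x) - 1) - (Real.sqrt (c + y) - 1)|
          * g (Real.sqrt (c + y) - 1) := hdist _ hmx _ hmy
      _ ≤ Real.exp (|x - y| / 2) * g (Real.sqrt (c + y) - 1) := by
          apply mul_le_mul_of_nonneg_right _ (hpos _ hmy)
          exact Real.exp_le_exp.mpr (branch_contract hx.1 hy.1 hc1)
  have h2 := weight_distortion (c := c) hx.1 hy.1 hc1
  have hwx : (0:ℝ) ≤ (2 * Real.sqrt (c + x))⁻¹ := by positivity
  have hgx : 0 ≤ g (Real.sqrt (c + x) - 1) := hpos _ hmx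
  calc (2 * Real.sqrt (c + x))⁻¹ * g (Real.sqrt (c + x) - 1)
      ≤ (Real.exp (|x - y| / 2) * (2 * Real.sqrt (c + y))⁻¹)
        * (Real.exp (|x - y| / 2) * g (Real.sqrt (c + y) - 1)) := by
        apply mul_le_mul h2 h1 hgx
        positivity
    _ = (Real.exp (|x - y| / 2) * Real.exp (|x - y| / 2))
        * ((2 * Real.sqrt (c + y))⁻¹ * g (Real.sqrt (c + y) - 1)) := by ring
    _ = Real.exp |x - y| * ((2 * Real.sqrt (c + y))⁻¹ * g (Real.sqrt (c + y) - 1)) := by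
        rw [← Real.exp_add]; norm_num

lemma key (n : ℕ) :
    ContinuousOn ((Lt 0)^[n] (fun _ => 1)) (Set.Icc (0:ℝ) 1) ∧
    (∀ x ∈ Set.Icc (0:ℝ) 1, 0 ≤ (Lt 0)^[n] (fun _ => 1) x) ∧
    (∀ x ∈ Set.Icc (0:ℝ) 1, ∀ y ∈ Set.Icc (0:ℝ) 1,
      (Lt 0)^[n] (fun _ => 1) x ≤ Real.exp |x - y| * (Lt 0)^[n] (fun _ => 1) y) ∧
    (∫ x in (0:ℝ)..1, (Lt 0)^[n] (fun _ => 1) x) = 1 := by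
  induction n with
  | zero =>
    refine ⟨continuousOn_const, fun x _ => by norm_num, fun x _ y _ => ?_, by simp⟩
    simpa using Real.one_le_exp (abs_nonneg (x - y))
  | succ n ih =>
    obtain ⟨hc, hpos, hdist, hint⟩ := ih
    set g := (Lt 0)^[n] (fun _ => (1:ℝ)) with hg
    have hstep : (Lt 0)^[n+1] (fun _ => (1:ℝ)) = Lt 0 g := by
      rw [Function.iterate_succ_apply']
    rw [hstep]
    refine ⟨Lt0_contOn hc, ?_, ?_, by rw [int_Lt0 hc]; exact hint⟩
    · intro x hx
      rw [Lt0_eq g x hx.1]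
      have h1 := hpos _ (sqrt_mem hx (by norm_num) (by norm_num) : Real.sqrt (1 + x) - 1 ∈ _)
      have h2 := hpos _ (sqrt_mem hx (by norm_num) (by norm_num) : Real.sqrt (2 + x) - 1 ∈ _)
      have h3 := hpos _ (sqrt_mem hx (by norm_num) (by norm_num) : Real.sqrt (3 + x) - 1 ∈ _)
      have w1 : (0:ℝ) ≤ (2 * Real.sqrt (1 + x))⁻¹ := by positivity
      have w2 : (0:ℝ) ≤ (2 * Real.sqrt (2 + x))⁻¹ := by positivity
      have w3 : (0:ℝ) ≤ (2 * Real.sqrt (3 + x))⁻¹ := by positivity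
      have := mul_nonneg w1 h1
      have := mul_nonneg w2 h2
      have := mul_nonneg w3 h3
      linarith
    · intro x hx y hy
      rw [Lt0_eq g x hx.1, Lt0_eq g y hy.1]
      have t1 := term_distort (c := 1) hx hy (by norm_num) (by norm_num) hpos hdist
      have t2 := term_distort (c := 2) hx hy (by norm_num) (by norm_num) hpos hdist
      have t3 := term_distort (c := 3) hx hy (by norm_num) (by norm_num) hpos hdist
      linarith


lemma supNorm_bounds (n : ℕ) :
    1 ≤ supNorm ((Lt 0)^[n] (fun _ => 1)) ∧ supNorm ((Lt 0)^[n] (fun _ => 1)) ≤ Real.exp 1 := by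
  obtain ⟨hc, hpos, hdist, hint⟩ := key n
  set f := (Lt 0)^[n] (fun _ => (1:ℝ)) with hf
  haveI : Nonempty ↥(Set.Icc (0:ℝ) 1) := ⟨⟨0, by norm_num, by norm_num⟩⟩
  have huIcc : Set.uIcc (0:ℝ) 1 = Set.Icc 0 1 := Set.uIcc_of_le (by norm_num)
  have hfi : IntervalIntegrable f volume 0 1 :=
    ContinuousOn.intervalIntegrable (by rw [huIcc]; exact hc)
  -- pointwise upper bound : f x ≤ exp 1
  have hub : ∀ x ∈ Set.Icc (0:ℝ) 1, f x ≤ Real.exp 1 := by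
    intro x hx
    have hmono : ∀ y ∈ Set.Icc (0:ℝ) 1, f x ≤ Real.exp 1 * f y := by
      intro y hy
      refine (hdist x hx y hy).trans ?_
      apply mul_le_mul_of_nonneg_right _ (hpos y hy)
      apply Real.exp_le_exp.mpr
      rw [abs_le]
      constructor <;> [linarith [hx.2, hy.1, hx.1, hy.2]; linarith [hx.2, hy.1]]
    have hI : f x = ∫ _ in (0:ℝ)..1, f x := by simp
    have : (∫ _ in (0:ℝ)..1, f x) ≤ ∫ y in (0:ℝ)..1, Real.exp 1 * f y := by
      apply intervalIntegral.integral_mono_on (by norm_num) intervalIntegrable_const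
        (hfi.const_mul _)
      intro y hy
      exact hmono y hy
    rw [intervalIntegral.integral_const_mul, hint, mul_one] at this
    linarith [hI ▸ this]
  have hbdd : BddAbove (Set.range fun x : Set.Icc (0:ℝ) 1 => |f x|) := by
    refine ⟨Real.exp 1, ?_⟩
    rintro v ⟨⟨x, hx⟩, rfl⟩
    simp only
    rw [abs_of_nonneg (hpos x hx)]
    exact hub x hx
  constructor
  · -- 1 = ∫ f ≤ supNorm
    have hle : ∀ y ∈ Set.Icc (0:ℝ) 1, f y ≤ supNorm f := by
      intro y hy
      have := le_ciSup hbdd ⟨y, hy⟩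
      calc f y ≤ |f y| := le_abs_self _
        _ ≤ supNorm f := this
    have : (1:ℝ) = ∫ x in (0:ℝ)..1, f x := hint.symm
    rw [this]
    calc (∫ x in (0:ℝ)..1, f x) ≤ ∫ _ in (0:ℝ)..1, supNorm f := by
          apply intervalIntegral.integral_mono_on (by norm_num) hfi intervalIntegrable_const
          exact hle
      _ = supNorm f := by simp
  · apply ciSup_le
    rintro ⟨x, hx⟩
    simp only
    rw [abs_of_nonneg (hpos x hx)]
    exact hub x hx

theorem pressure_zero_at_zero :
    Tendsto (fun n : ℕ => (1 / n : ℝ) * Real.log (supNorm ((Lt 0)^[n] (fun _ => 1))))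
      atTop (nhds 0) := by
  have h0 : ∀ n : ℕ, 0 ≤ (1 / n : ℝ) * Real.log (supNorm ((Lt 0)^[n] (fun _ => 1))) := by
    intro n
    apply mul_nonneg (by positivity)
    exact Real.log_nonneg (supNorm_bounds n).1
  have h1 : ∀ n : ℕ, (1 / n : ℝ) * Real.log (supNorm ((Lt 0)^[n] (fun _ => 1))) ≤ 1 / n := by
    intro n
    have hlog : Real.log (supNorm ((Lt 0)^[n] (fun _ => 1))) ≤ 1 := by
      have hpos : (0:ℝ) < supNorm ((Lt 0)^[n] (fun _ => 1)) :=
        lt_of_lt_of_le one_pos (supNorm_bounds n).1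
      rw [Real.log_le_iff_le_exp hpos]
      exact (supNorm_bounds n).2
    calc (1 / n : ℝ) * Real.log (supNorm ((Lt 0)^[n] (fun _ => 1)))
        ≤ (1 / n : ℝ) * 1 := by
          apply mul_le_mul_of_nonneg_left hlog (by positivity)
      _ = 1 / n := mul_one _
  exact squeeze_zero h0 h1 tendsto_one_div_atTop_nhds_zero_nat
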